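/- arXiv:1909.03574 — 4 statements merged into one kernel-verified Lean document; each statement's English description precedes it below -/
import Mathlib

section
/- Assume (A0) and (A1). Then for every subset D with G_{≤0} ⊆ D ⊆ G and every w ∈ ℝ^G there exists a unique v* ∈ ℝ^G solving the constrained QVI problem: max{Lv* + f, Mv* − v*} = 0 on D and v* = w on D^c. Moreover, the restriction v*_D is the unique solution ṽ ∈ ℝ^D of the restricted QVI max{L̃ṽ + f̃, M̃ṽ − ṽ} = 0. -/
open Matrix Finset Filter Topology

noncomputable section

section MatrixDefs

variable {n : Type*} [Fintype n] [DecidableEq n]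

/-- A Z-matrix: nonpositive off-diagonal entries. -/
def IsZMatrix (A : Matrix n n ℝ) : Prop := ∀ i j, i ≠ j → A i j ≤ 0

/-- An L0-matrix: a Z-matrix with nonnegative diagonal entries. -/
def IsL0Matrix (A : Matrix n n ℝ) : Prop := IsZMatrix A ∧ ∀ i, 0 ≤ A i i

/-- Row `i` of `A` is strictly diagonally dominant. -/
def SDDRow (A : Matrix n n ℝ) (i : n) : Prop :=
  ∑ j ∈ Finset.univ.erase i, |A i j| < |A i i|

/-- Row `i` of `A` is weakly diagonally dominant. -/
def WDDRow (A : Matrix n n ℝ) (i : n) : Prop :=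
  ∑ j ∈ Finset.univ.erase i, |A i j| ≤ |A i i|

def IsWDD (A : Matrix n n ℝ) : Prop := ∀ i, WDDRow A i

def IsSDD (A : Matrix n n ℝ) : Prop := ∀ i, SDDRow A i

/-- A (nonempty) walk in the directed graph of `A` (edge `a → b` iff `A a b ≠ 0`). -/
def MWalk (A : Matrix n n ℝ) (i j : n) : Prop :=
  Relation.TransGen (fun a b => A a b ≠ 0) i j

/-- Weakly chained diagonally dominant matrix. -/
def IsWCDD (A : Matrix n n ℝ) : Prop :=
  IsWDD A ∧ ∀ i, ¬ SDDRow A i → ∃ j, SDDRow A j ∧ MWalk A i j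

/-- Substochastic matrix: nonnegative entries and row sums at most one. -/
def IsSubstochastic (A : Matrix n n ℝ) : Prop :=
  (∀ i j, 0 ≤ A i j) ∧ ∀ i, ∑ j, A i j ≤ 1

end MatrixDefs

/-- The data of a (discretized) symmetric nonzero-sum impulse game on the symmetric grid
`x (-N) < … < x 0 = 0 < … < x N`, indexed here by `Fin (2*N+1)` (so that index `N`
corresponds to the grid point `0`, and `Fin.rev` is the reflection `x ↦ -x`). -/
structure GameSetup (N : ℕ) where
  x : Fin (2*N+1) → ℝ
  hx_mono : StrictMono x
  hx_sym : ∀ i, x i.rev = -(x i)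
  Z : Fin (2*N+1) → Finset ℝ
  hZ_ne : ∀ i, (Z i).Nonempty
  hZ_nonneg : ∀ i, ∀ d ∈ Z i, 0 ≤ d
  hZ_zero : ∀ i, 0 ≤ x i → Z i = {0}
  B : (Fin (2*N+1) → ℝ) → Matrix (Fin (2*N+1)) (Fin (2*N+1)) ℝ
  c : (Fin (2*N+1) → ℝ) → Fin (2*N+1) → ℝ
  g : (Fin (2*N+1) → ℝ) → Fin (2*N+1) → ℝ
  hB_rd : ∀ δ δ' i, δ i = δ' i → B δ i = B δ' i
  hc_rd : ∀ δ δ' i, δ i = δ' i → c δ i = c δ' i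
  hg_rd : ∀ δ δ' i, δ i = δ' i → g δ i = g δ' i
  hc_pos : ∀ δ, (∀ i, δ i ∈ Z i) → ∀ i, 0 < c δ i
  L : Matrix (Fin (2*N+1)) (Fin (2*N+1)) ℝ
  f : Fin (2*N+1) → ℝ

variable {N : ℕ}

/-- The symmetry (permutation) matrix `S v (x) = v (-x)`. -/
def Smat (N : ℕ) : Matrix (Fin (2*N+1)) (Fin (2*N+1)) ℝ :=
  Matrix.of fun i j => if j = i.rev then (1:ℝ) else 0

namespace GameSetup

variable (s : GameSetup N)

/-- Admissible impulse functions: `δ i ∈ Z i` for all grid points. -/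
def Adm (δ : Fin (2*N+1) → ℝ) : Prop := ∀ i, δ i ∈ s.Z i

/-- The discrete loss operator `M v = max_{δ ∈ Z} (B δ v - c δ)` (entrywise, using
row-decoupledness to maximize row by row). -/
def M (v : Fin (2*N+1) → ℝ) (i : Fin (2*N+1)) : ℝ :=
  (s.Z i).sup' (s.hZ_ne i) fun d => (s.B fun _ => d).mulVec v i - s.c (fun _ => d) i

/-- `δstar v i`: the largest impulse in `Z i` attaining the maximum defining `M v i`. -/
def δstar (v : Fin (2*N+1) → ℝ) (i : Fin (2*N+1)) : ℝ :=
  ((s.Z i).filter fun d =>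
    (s.B fun _ => d).mulVec v i - s.c (fun _ => d) i = s.M v i).max.unbotD 0

/-- The discrete gain operator `H v = S B(δ*(v)) S v + g (S δ*(v))`. -/
def H (v : Fin (2*N+1) → ℝ) : Fin (2*N+1) → ℝ :=
  (Smat N * s.B (s.δstar v) * Smat N).mulVec v + s.g (s.δstar v ∘ Fin.rev)

/-- A (discrete) strategy: an intervention region `I ⊆ G_{<0}` and an admissible
impulse function. -/
structure Strategy where
  I : Finset (Fin (2*N+1))
  δ : Fin (2*N+1) → ℝ
  hI : ∀ i ∈ I, s.x i < 0
  hδ : ∀ i, δ i ∈ s.Z i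

/-- The diagonal indicator matrix of the intervention region of a strategy. -/
def Psi (φ : s.Strategy) : Matrix (Fin (2*N+1)) (Fin (2*N+1)) ℝ :=
  Matrix.diagonal fun i => if i ∈ φ.I then (1:ℝ) else 0

/-- `𝔸(φ,φ̄) = Id − (Id − Ψ̄ − SΨS)(Id + L) − Ψ̄ B(δ̄)`. -/
def Amat (φ φ' : s.Strategy) : Matrix (Fin (2*N+1)) (Fin (2*N+1)) ℝ :=
  1 - (1 - s.Psi φ' - Smat N * s.Psi φ * Smat N) * (1 + s.L) - s.Psi φ' * s.B φ'.δ

/-- `𝔹(φ) = S Ψ B(δ) S`. -/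
def Bmat (φ : s.Strategy) : Matrix (Fin (2*N+1)) (Fin (2*N+1)) ℝ :=
  Smat N * s.Psi φ * s.B φ.δ * Smat N

/-- `ℂ(φ,φ̄) = (Id − Ψ̄ − SΨS) f − Ψ̄ c(δ̄) + SΨS g(Sδ)`. -/
def Cvec (φ φ' : s.Strategy) : Fin (2*N+1) → ℝ :=
  (1 - s.Psi φ' - Smat N * s.Psi φ * Smat N).mulVec s.f - (s.Psi φ').mulVec (s.c φ'.δ)
    + (Smat N * s.Psi φ * Smat N).mulVec (s.g (φ.δ ∘ Fin.rev))

/-- Assumption (A0). -/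
def A0 : Prop := ∀ φ : s.Strategy, ∀ i ∈ φ.I, ∃ j, j ∉ φ.I ∧ MWalk (s.B φ.δ) i j

/-- Assumption (A1). -/
def A1 : Prop :=
  (IsSDD (-s.L) ∧ IsL0Matrix (-s.L)) ∧
    ∀ δ, s.Adm δ → IsWDD (1 - s.B δ) ∧ IsL0Matrix (1 - s.B δ)

/-- Assumption (A2). -/
def A2 : Prop := ∀ δ, s.Adm δ → ∀ i, 0 ≤ s.B δ i i

/-- Assumption (A0'). -/
def A0' : Prop :=
  ∀ φ φ' : s.Strategy, ∀ i, (i ∈ φ'.I ∨ i.rev ∈ φ.I) →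
    ∃ j, ¬(j ∈ φ'.I ∨ j.rev ∈ φ.I) ∧
      MWalk (s.Psi φ' * s.B φ'.δ + Smat N * s.Psi φ * s.B φ.δ * Smat N) i j

/-- Identity-row condition: zero impulse gives the corresponding identity row. -/
def IdRow : Prop :=
  ∀ δ, s.Adm δ → ∀ i, δ i = 0 →
    s.B δ i = (1 : Matrix (Fin (2*N+1)) (Fin (2*N+1)) ℝ) i

/-- The discrete QVI system: `Mv − v ≤ 0` on `G`, `Hv − v = 0` on `−I*(v)`, and
`max{Lv + f, Mv − v} = 0` on `−C*(v)`. -/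
def SolvesQVI (v : Fin (2*N+1) → ℝ) : Prop :=
  (∀ i, s.M v i - v i ≤ 0) ∧
  (∀ i, s.M v i.rev - v i.rev = 0 → s.H v i - v i = 0) ∧
  (∀ i, s.M v i.rev - v i.rev < 0 →
    max (s.L.mulVec v i + s.f i) (s.M v i - v i) = 0)

/-- The intervention region induced by a payoff `v`. -/
def indI (v : Fin (2*N+1) → ℝ) : Finset (Fin (2*N+1)) :=
  Finset.univ.filter fun i => s.x i < 0 ∧ s.L.mulVec v i + s.f i ≤ s.M v i - v i

/-- `φ` is the strategy induced by the payoff `v`. -/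
def IsInduced (v : Fin (2*N+1) → ℝ) (φ : s.Strategy) : Prop :=
  φ.I = s.indI v ∧ φ.δ = s.δstar v

/-- An algorithm sequence: payoffs `v^k` with induced strategies `φ^k` satisfying the
fixed-point recurrence `𝔸(φ^k,φ^{k+1}) v^{k+1} = 𝔹(φ^k) v^k + ℂ(φ^k,φ^{k+1})`. -/
def IsAlgSeq (v : ℕ → Fin (2*N+1) → ℝ) (φ : ℕ → s.Strategy) : Prop :=
  (∀ k, s.IsInduced (v k) (φ k)) ∧
  ∀ k, (s.Amat (φ k) (φ (k+1))).mulVec (v (k+1)) =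
    (s.Bmat (φ k)).mulVec (v k) + s.Cvec (φ k) (φ (k+1))

/-- The discrete unique impulse property. -/
def UIP (v : Fin (2*N+1) → ℝ) : Prop :=
  ∀ i, s.M v i = v i →
    ∃! d, d ∈ s.Z i ∧ (s.B fun _ => d).mulVec v i - s.c (fun _ => d) i = s.M v i

end GameSetup

/-- Restricted matrix `L̃ = L_{DD}`. -/
def Ltil (s : GameSetup N) (D : Finset (Fin (2*N+1))) :
    Matrix {i // i ∈ D} {i // i ∈ D} ℝ :=
  s.L.submatrix Subtype.val Subtype.val

/-- Restricted right-hand side `f̃ = f_D + L_{D Dᶜ} w_{Dᶜ}`. -/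
def ftil (s : GameSetup N) (D : Finset (Fin (2*N+1))) (w : Fin (2*N+1) → ℝ)
    (i : {i // i ∈ D}) : ℝ :=
  s.f i.val + ∑ j ∈ Dᶜ, s.L i.val j * w j

/-- Value of `B̃(δ̃) ṽ − c̃(δ̃)` in row `i` for the fixed impulse `d ∈ Z i`, where
`B̃(δ̃) = B(δ̃)_{DD}` and `c̃(δ̃) = c(δ̃)_D − B(δ̃)_{D Dᶜ} w_{Dᶜ}`. -/
def MtilVal (s : GameSetup N) (D : Finset (Fin (2*N+1))) (w : Fin (2*N+1) → ℝ)
    (d : ℝ) (vt : {i // i ∈ D} → ℝ) (i : {i // i ∈ D}) : ℝ :=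
  (∑ j : {i // i ∈ D}, s.B (fun _ => d) i.val j.val * vt j)
    - (s.c (fun _ => d) i.val - ∑ j ∈ Dᶜ, s.B (fun _ => d) i.val j * w j)

/-- The restricted loss operator `M̃ ṽ = max_{δ̃ ∈ Z̃} {B̃(δ̃) ṽ − c̃(δ̃)}`. -/
def Mtil (s : GameSetup N) (D : Finset (Fin (2*N+1))) (w : Fin (2*N+1) → ℝ)
    (vt : {i // i ∈ D} → ℝ) (i : {i // i ∈ D}) : ℝ :=
  (s.Z i.val).sup' (s.hZ_ne i.val) fun d => MtilVal s D w d vt i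

section Statement0Aux

variable {N : ℕ}

private lemma max_eq_zero_iff' {a b : ℝ} :
    max a b = 0 ↔ (a ≤ 0 ∧ b ≤ 0) ∧ (a = 0 ∨ b = 0) := by
  constructor
  · intro h
    have ha : a ≤ 0 := h ▸ le_max_left a b
    have hb : b ≤ 0 := h ▸ le_max_right a b
    refine ⟨⟨ha, hb⟩, ?_⟩
    rcases max_choice a b with hc | hc
    · exact Or.inl (hc ▸ h)
    · exact Or.inr (hc ▸ h)
  · rintro ⟨⟨ha, hb⟩, h0 | h0⟩ <;> subst h0
    · exact max_eq_left hb
    · exact max_eq_right ha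

namespace GameSetup

variable (s : GameSetup N)

/-- Extend a single impulse value at `i` to an admissible impulse function. -/
def extδ (i : Fin (2*N+1)) (d : ℝ) : Fin (2*N+1) → ℝ :=
  fun j => if j = i then d else (s.hZ_ne j).choose

lemma extδ_adm {i : Fin (2*N+1)} {d : ℝ} (hd : d ∈ s.Z i) : s.Adm (s.extδ i d) := by
  intro j
  unfold extδ
  split
  · next h => subst h; exact hd
  · exact (s.hZ_ne j).choose_spec

lemma extδ_apply (i : Fin (2*N+1)) (d : ℝ) : s.extδ i d i = d := if_pos rfl

lemma c_pos' {i : Fin (2*N+1)} {d : ℝ} (hd : d ∈ s.Z i) : 0 < s.c (fun _ => d) i := by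
  have h := s.hc_rd (fun _ => d) (s.extδ i d) i (s.extδ_apply i d).symm
  rw [h]
  exact s.hc_pos _ (s.extδ_adm hd) i

lemma B_row_eq (i : Fin (2*N+1)) (d : ℝ) : s.B (fun _ => d) i = s.B (s.extδ i d) i :=
  s.hB_rd _ _ i (s.extδ_apply i d).symm

lemma B_offdiag_nonneg (hA1 : s.A1) {i : Fin (2*N+1)} {d : ℝ} (hd : d ∈ s.Z i)
    {j : Fin (2*N+1)} (hj : j ≠ i) : 0 ≤ s.B (fun _ => d) i j := by
  have h := ((hA1.2 _ (s.extδ_adm hd)).2).1 i j (Ne.symm hj)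
  rw [Matrix.sub_apply, Matrix.one_apply_ne (Ne.symm hj)] at h
  have hrow := congrFun (s.B_row_eq i d) j
  rw [hrow]
  linarith

lemma B_diag_le_one (hA1 : s.A1) {i : Fin (2*N+1)} {d : ℝ} (hd : d ∈ s.Z i) :
    s.B (fun _ => d) i i ≤ 1 := by
  have h := ((hA1.2 _ (s.extδ_adm hd)).2).2 i
  rw [Matrix.sub_apply, Matrix.one_apply_eq] at h
  have hrow := congrFun (s.B_row_eq i d) i
  rw [hrow]
  linarith

lemma B_row_sum (hA1 : s.A1) {i : Fin (2*N+1)} {d : ℝ} (hd : d ∈ s.Z i) :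
    ∑ j ∈ Finset.univ.erase i, s.B (fun _ => d) i j ≤ 1 - s.B (fun _ => d) i i := by
  have h := (hA1.2 _ (s.extδ_adm hd)).1 i
  unfold WDDRow at h
  have hdiag : (1 - s.B (s.extδ i d)) i i = 1 - s.B (s.extδ i d) i i := by
    rw [Matrix.sub_apply, Matrix.one_apply_eq]
  have hdnn := ((hA1.2 _ (s.extδ_adm hd)).2).2 i
  rw [hdiag] at h
  rw [abs_of_nonneg (by rw [hdiag] at hdnn; exact hdnn)] at h
  have hsum : ∑ j ∈ Finset.univ.erase i, |(1 - s.B (s.extδ i d)) i j|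
      = ∑ j ∈ Finset.univ.erase i, s.B (s.extδ i d) i j := by
    apply Finset.sum_congr rfl
    intro j hj
    have hji : j ≠ i := (Finset.mem_erase.1 hj).1
    rw [Matrix.sub_apply, Matrix.one_apply_ne (Ne.symm hji), zero_sub, abs_neg]
    have := ((hA1.2 _ (s.extδ_adm hd)).2).1 i j (Ne.symm hji)
    rw [Matrix.sub_apply, Matrix.one_apply_ne (Ne.symm hji)] at this
    exact abs_of_nonneg (by linarith)
  rw [hsum] at h
  calc ∑ j ∈ Finset.univ.erase i, s.B (fun _ => d) i j
      = ∑ j ∈ Finset.univ.erase i, s.B (s.extδ i d) i j := by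
        exact Finset.sum_congr rfl fun j _ => congrFun (s.B_row_eq i d) j
    _ ≤ 1 - s.B (s.extδ i d) i i := h
    _ = 1 - s.B (fun _ => d) i i := by rw [← congrFun (s.B_row_eq i d) i]

lemma L_offdiag_nonneg (hA1 : s.A1) {i j : Fin (2*N+1)} (hj : j ≠ i) : 0 ≤ s.L i j := by
  have h := hA1.1.2.1 i j (Ne.symm hj)
  rw [Matrix.neg_apply] at h
  linarith

lemma L_gap_pos (hA1 : s.A1) (i : Fin (2*N+1)) :
    ∑ j ∈ Finset.univ.erase i, s.L i j < -(s.L i i) := by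
  have h := hA1.1.1 i
  unfold SDDRow at h
  have hd := hA1.1.2.2 i
  rw [Matrix.neg_apply] at hd
  have hdd : |(-s.L) i i| = -(s.L i i) := by
    rw [Matrix.neg_apply]; exact abs_of_nonneg (by linarith)
  rw [hdd] at h
  calc ∑ j ∈ Finset.univ.erase i, s.L i j
      ≤ ∑ j ∈ Finset.univ.erase i, |(-s.L) i j| := by
        apply Finset.sum_le_sum
        intro j hj
        rw [Matrix.neg_apply, abs_neg]
        exact le_abs_self _
    _ < -(s.L i i) := h

lemma L_diag_neg (hA1 : s.A1) (i : Fin (2*N+1)) : s.L i i < 0 := by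
  have h := s.L_gap_pos hA1 i
  have h2 : 0 ≤ ∑ j ∈ Finset.univ.erase i, s.L i j :=
    Finset.sum_nonneg fun j hj => s.L_offdiag_nonneg hA1 (Finset.mem_erase.1 hj).1
  linarith

end GameSetup

end Statement0Aux
section Statement0Aux2

variable {N : ℕ}

namespace GameSetup

variable (s : GameSetup N)

/-- Normalized PDE branch value. -/
def Pde (v : Fin (2*N+1) → ℝ) (i : Fin (2*N+1)) : ℝ :=
  (s.f i + ∑ j ∈ Finset.univ.erase i, s.L i j * v j) / (-(s.L i i))

/-- Normalized impulse branch value for a fixed impulse `d`. -/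
def Qval (v : Fin (2*N+1) → ℝ) (i : Fin (2*N+1)) (d : ℝ) : ℝ :=
  if s.B (fun _ => d) i i < 1 then
    ((∑ j ∈ Finset.univ.erase i, s.B (fun _ => d) i j * v j) - s.c (fun _ => d) i)
      / (1 - s.B (fun _ => d) i i)
  else s.Pde v i - 1

/-- The fixed point operator for the constrained QVI. -/
def Tmap (D : Finset (Fin (2*N+1))) (w : Fin (2*N+1) → ℝ)
    (v : Fin (2*N+1) → ℝ) (i : Fin (2*N+1)) : ℝ :=
  if i ∈ D then max (s.Pde v i) ((s.Z i).sup' (s.hZ_ne i) (s.Qval v i)) else w i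

lemma mulVec_split (A : Matrix (Fin (2*N+1)) (Fin (2*N+1)) ℝ) (v : Fin (2*N+1) → ℝ)
    (i : Fin (2*N+1)) :
    A.mulVec v i = A i i * v i + ∑ j ∈ Finset.univ.erase i, A i j * v j := by
  rw [Matrix.mulVec, dotProduct]
  exact (Finset.add_sum_erase _ _ (Finset.mem_univ i)).symm

lemma Lv_eq (hA1 : s.A1) (v : Fin (2*N+1) → ℝ) (i : Fin (2*N+1)) :
    s.L.mulVec v i + s.f i = (-(s.L i i)) * (s.Pde v i - v i) := by
  have ha : -(s.L i i) ≠ 0 := ne_of_gt (by linarith [s.L_diag_neg hA1 i])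
  rw [mulVec_split, Pde, mul_sub, mul_div_cancel₀ _ ha]
  ring

lemma impulse_eq_good (v : Fin (2*N+1) → ℝ) {i : Fin (2*N+1)} {d : ℝ}
    (h : s.B (fun _ => d) i i < 1) :
    (s.B (fun _ => d)).mulVec v i - s.c (fun _ => d) i - v i
      = (1 - s.B (fun _ => d) i i) * (s.Qval v i d - v i) := by
  have ha : (1 : ℝ) - s.B (fun _ => d) i i ≠ 0 := ne_of_gt (by linarith)
  rw [mulVec_split, Qval, if_pos h, mul_sub, mul_div_cancel₀ _ ha]
  ring

lemma impulse_eq_bad (hA1 : s.A1) (v : Fin (2*N+1) → ℝ) {i : Fin (2*N+1)} {d : ℝ}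
    (hd : d ∈ s.Z i) (h : ¬ s.B (fun _ => d) i i < 1) :
    (s.B (fun _ => d)).mulVec v i - s.c (fun _ => d) i - v i = - s.c (fun _ => d) i := by
  have h1 : s.B (fun _ => d) i i = 1 :=
    le_antisymm (s.B_diag_le_one hA1 hd) (not_lt.1 h)
  have hsum : ∑ j ∈ Finset.univ.erase i, s.B (fun _ => d) i j = 0 := by
    have hle := s.B_row_sum hA1 hd
    rw [h1] at hle
    have hge : 0 ≤ ∑ j ∈ Finset.univ.erase i, s.B (fun _ => d) i j :=
      Finset.sum_nonneg fun j hj =>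
        s.B_offdiag_nonneg hA1 hd (Finset.mem_erase.1 hj).1
    linarith
  have hzero : ∀ j ∈ Finset.univ.erase i, s.B (fun _ => d) i j = 0 := by
    intro j hj
    exact (Finset.sum_eq_zero_iff_of_nonneg fun k hk =>
      s.B_offdiag_nonneg hA1 hd (Finset.mem_erase.1 hk).1).1 hsum j hj
  rw [mulVec_split, h1, Finset.sum_eq_zero fun j hj => by rw [hzero j hj, zero_mul]]
  ring

/-- The key pointwise equivalence between the QVI equation and the fixed point form. -/
lemma fixed_iff (hA1 : s.A1) (v : Fin (2*N+1) → ℝ) (i : Fin (2*N+1)) :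
    max (s.L.mulVec v i + s.f i) (s.M v i - v i) = 0
      ↔ max (s.Pde v i) ((s.Z i).sup' (s.hZ_ne i) (s.Qval v i)) = v i := by
  have ha : 0 < -(s.L i i) := by linarith [s.L_diag_neg hA1 i]
  constructor
  · intro h
    obtain ⟨⟨h1, h2⟩, h3⟩ := max_eq_zero_iff'.1 h
    rw [s.Lv_eq hA1] at h1
    have hP : s.Pde v i ≤ v i := by nlinarith
    have hQ : ∀ d ∈ s.Z i, s.Qval v i d ≤ v i := by
      intro d hd
      by_cases hg : s.B (fun _ => d) i i < 1
      · have ht : (s.B (fun _ => d)).mulVec v i - s.c (fun _ => d) i - v i ≤ 0 := by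
          have := Finset.le_sup' (f := fun d =>
            (s.B fun _ => d).mulVec v i - s.c (fun _ => d) i) hd
          have hM : (s.B fun _ => d).mulVec v i - s.c (fun _ => d) i ≤ s.M v i := this
          linarith
        rw [s.impulse_eq_good v hg] at ht
        nlinarith
      · rw [Qval, if_neg hg]; linarith
    refine le_antisymm (max_le hP (Finset.sup'_le _ _ hQ)) ?_
    rcases h3 with h3 | h3
    · rw [s.Lv_eq hA1] at h3
      have : s.Pde v i = v i := by
        rcases mul_eq_zero.1 h3 with hc | hc
        · exact absurd hc (ne_of_gt ha)
        · linarith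
      rw [← this]; exact le_max_left _ _
    · obtain ⟨d, hd, hde⟩ := Finset.exists_mem_eq_sup' (s.hZ_ne i)
        (fun d => (s.B fun _ => d).mulVec v i - s.c (fun _ => d) i)
      have htd : (s.B fun _ => d).mulVec v i - s.c (fun _ => d) i - v i = 0 := by
        have : s.M v i = (s.B fun _ => d).mulVec v i - s.c (fun _ => d) i := hde
        linarith
      by_cases hg : s.B (fun _ => d) i i < 1
      · rw [s.impulse_eq_good v hg] at htd
        have hQd : s.Qval v i d = v i := by
          rcases mul_eq_zero.1 htd with hc | hc
          · exact absurd hc (ne_of_gt (by linarith))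
          · linarith
        calc v i = s.Qval v i d := hQd.symm
          _ ≤ (s.Z i).sup' (s.hZ_ne i) (s.Qval v i) := Finset.le_sup' _ hd
          _ ≤ _ := le_max_right _ _
      · rw [s.impulse_eq_bad hA1 v hd hg] at htd
        exact absurd htd (ne_of_lt (by linarith [s.c_pos' hd]))
  · intro h
    have hP : s.Pde v i ≤ v i := h ▸ le_max_left _ _
    have hQ : ∀ d ∈ s.Z i, s.Qval v i d ≤ v i := fun d hd =>
      le_trans (Finset.le_sup' _ hd) (h ▸ le_max_right _ _)
    have hterm : ∀ d ∈ s.Z i,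
        (s.B fun _ => d).mulVec v i - s.c (fun _ => d) i - v i ≤ 0 := by
      intro d hd
      by_cases hg : s.B (fun _ => d) i i < 1
      · rw [s.impulse_eq_good v hg]
        have := hQ d hd
        nlinarith
      · rw [s.impulse_eq_bad hA1 v hd hg]
        linarith [s.c_pos' hd]
    have hM : s.M v i - v i ≤ 0 := by
      have : s.M v i ≤ v i := Finset.sup'_le _ _ fun d hd => by
        have := hterm d hd; linarith
      linarith
    apply max_eq_zero_iff'.2
    refine ⟨⟨?_, hM⟩, ?_⟩
    · rw [s.Lv_eq hA1]
      exact mul_nonpos_of_nonneg_of_nonpos ha.le (by linarith)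
    · rcases max_choice (s.Pde v i) ((s.Z i).sup' (s.hZ_ne i) (s.Qval v i)) with hc | hc
      · left
        rw [s.Lv_eq hA1, hc.symm.trans h, sub_self, mul_zero]
      · right
        obtain ⟨d, hd, hde⟩ := Finset.exists_mem_eq_sup' (s.hZ_ne i) (s.Qval v i)
        have hQd : s.Qval v i d = v i := by rw [← hde, hc.symm.trans h]
        by_cases hg : s.B (fun _ => d) i i < 1
        · have ht0 : (s.B fun _ => d).mulVec v i - s.c (fun _ => d) i - v i = 0 := by
            rw [s.impulse_eq_good v hg, hQd, sub_self, mul_zero]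
          have hle : (s.B fun _ => d).mulVec v i - s.c (fun _ => d) i ≤ s.M v i :=
            Finset.le_sup' (fun d => (s.B fun _ => d).mulVec v i - s.c (fun _ => d) i) hd
          linarith
        · exfalso
          rw [Qval, if_neg hg] at hQd
          linarith


end GameSetup

end Statement0Aux2
section Statement0Aux3

variable {N : ℕ}

namespace GameSetup

variable (s : GameSetup N)

lemma Pde_mono (hA1 : s.A1) {v v' : Fin (2*N+1) → ℝ} (h : ∀ j, v j ≤ v' j)
    (i : Fin (2*N+1)) : s.Pde v i ≤ s.Pde v' i := by
  have ha : 0 < -(s.L i i) := by linarith [s.L_diag_neg hA1 i]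
  rw [Pde, Pde]
  apply div_le_div_of_nonneg_right ?_ ha.le |>.trans_eq rfl
  case _ =>
    apply add_le_add (le_refl _)
    apply Finset.sum_le_sum
    intro j hj
    exact mul_le_mul_of_nonneg_left (h j)
      (s.L_offdiag_nonneg hA1 (Finset.mem_erase.1 hj).1)

lemma Qval_mono (hA1 : s.A1) {v v' : Fin (2*N+1) → ℝ} (h : ∀ j, v j ≤ v' j)
    {i : Fin (2*N+1)} {d : ℝ} (hd : d ∈ s.Z i) : s.Qval v i d ≤ s.Qval v' i d := by
  by_cases hg : s.B (fun _ => d) i i < 1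
  · rw [Qval, Qval, if_pos hg, if_pos hg]
    have hb : 0 < 1 - s.B (fun _ => d) i i := by linarith
    apply div_le_div_of_nonneg_right ?_ hb.le |>.trans_eq rfl
    case _ =>
      apply sub_le_sub_right
      apply Finset.sum_le_sum
      intro j hj
      exact mul_le_mul_of_nonneg_left (h j)
        (s.B_offdiag_nonneg hA1 hd (Finset.mem_erase.1 hj).1)
  · rw [Qval, Qval, if_neg hg, if_neg hg]
    exact sub_le_sub_right (s.Pde_mono hA1 h i) 1

lemma Tmap_mono (hA1 : s.A1) (D : Finset (Fin (2*N+1))) (w : Fin (2*N+1) → ℝ)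
    {v v' : Fin (2*N+1) → ℝ} (h : ∀ j, v j ≤ v' j) (i : Fin (2*N+1)) :
    s.Tmap D w v i ≤ s.Tmap D w v' i := by
  rw [Tmap, Tmap]
  split
  · exact max_le_max (s.Pde_mono hA1 h i)
      (Finset.sup'_mono_fun fun d hd => s.Qval_mono hA1 h hd)
  · exact le_refl _

lemma exists_fixed (hA1 : s.A1) (D : Finset (Fin (2*N+1))) (w : Fin (2*N+1) → ℝ) :
    ∃ v : Fin (2*N+1) → ℝ, ∀ i, s.Tmap D w v i = v i := by
  classical
  set gap : Fin (2*N+1) → ℝ :=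
    fun i => -(s.L i i) - ∑ j ∈ Finset.univ.erase i, s.L i j with hgap
  have hgap_pos : ∀ i, 0 < gap i := fun i => by
    have := s.L_gap_pos hA1 i
    simp only [hgap]
    linarith
  set K : ℝ := ∑ i, (|w i| + |s.f i| / gap i) with hK
  have hterm : ∀ i, 0 ≤ |w i| + |s.f i| / gap i := fun i =>
    add_nonneg (abs_nonneg _) (div_nonneg (abs_nonneg _) (hgap_pos i).le)
  have hK0 : 0 ≤ K := Finset.sum_nonneg fun i _ => hterm i
  have hle : ∀ i, |w i| + |s.f i| / gap i ≤ K := fun i =>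
    Finset.single_le_sum (fun j _ => hterm j) (Finset.mem_univ i)
  have hKw : ∀ i, |w i| ≤ K := fun i =>
    le_trans (le_add_of_nonneg_right (div_nonneg (abs_nonneg _) (hgap_pos i).le)) (hle i)
  have hKf : ∀ i, |s.f i| ≤ K * gap i := by
    intro i
    have h1 : |s.f i| / gap i ≤ K :=
      le_trans (le_add_of_nonneg_left (abs_nonneg _)) (hle i)
    calc |s.f i| = |s.f i| / gap i * gap i :=
          (div_mul_cancel₀ _ (ne_of_gt (hgap_pos i))).symm
      _ ≤ K * gap i := mul_le_mul_of_nonneg_right h1 (hgap_pos i).le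
  have hPb : ∀ v : Fin (2*N+1) → ℝ, (∀ j, |v j| ≤ K) → ∀ i, |s.Pde v i| ≤ K := by
    intro v hv i
    have ha : 0 < -(s.L i i) := by linarith [s.L_diag_neg hA1 i]
    rw [Pde, abs_div, abs_of_pos ha, div_le_iff₀ ha]
    have h1 : |s.f i + ∑ j ∈ Finset.univ.erase i, s.L i j * v j|
        ≤ |s.f i| + ∑ j ∈ Finset.univ.erase i, s.L i j * K := by
      refine le_trans (abs_add_le _ _) (add_le_add (le_refl _) ?_)
      refine le_trans (Finset.abs_sum_le_sum_abs _ _) (Finset.sum_le_sum ?_)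
      intro j hj
      have hLnn := s.L_offdiag_nonneg hA1 (Finset.mem_erase.1 hj).1
      rw [abs_mul, abs_of_nonneg hLnn]
      exact mul_le_mul_of_nonneg_left (hv j) hLnn
    have h2 : ∑ j ∈ Finset.univ.erase i, s.L i j * K
        = (∑ j ∈ Finset.univ.erase i, s.L i j) * K := (Finset.sum_mul _ _ _).symm
    have h3 := hKf i
    have h4 : gap i = -(s.L i i) - ∑ j ∈ Finset.univ.erase i, s.L i j := rfl
    nlinarith [h1, h2, h3]
  have hQb : ∀ v : Fin (2*N+1) → ℝ, (∀ j, |v j| ≤ K) → ∀ i : Fin (2*N+1),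
      ∀ d ∈ s.Z i, s.Qval v i d ≤ K := by
    intro v hv i d hd
    by_cases hg : s.B (fun _ => d) i i < 1
    · rw [Qval, if_pos hg]
      have hb : 0 < 1 - s.B (fun _ => d) i i := by linarith
      rw [div_le_iff₀ hb]
      have h1 : ∑ j ∈ Finset.univ.erase i, s.B (fun _ => d) i j * v j
          ≤ ∑ j ∈ Finset.univ.erase i, s.B (fun _ => d) i j * K := by
        apply Finset.sum_le_sum
        intro j hj
        have hBnn := s.B_offdiag_nonneg hA1 hd (Finset.mem_erase.1 hj).1
        exact mul_le_mul_of_nonneg_left (le_trans (le_abs_self _) (hv j)) hBnn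
      have h2 : ∑ j ∈ Finset.univ.erase i, s.B (fun _ => d) i j * K
          = (∑ j ∈ Finset.univ.erase i, s.B (fun _ => d) i j) * K :=
        (Finset.sum_mul _ _ _).symm
      have h3 := s.B_row_sum hA1 hd
      have h4 := s.c_pos' hd
      nlinarith [mul_le_mul_of_nonneg_right h3 hK0]
    · rw [Qval, if_neg hg]
      have := hPb v hv i
      have := abs_le.1 this
      linarith [this.2]
  have hTb : ∀ v : Fin (2*N+1) → ℝ, (∀ j, |v j| ≤ K) → ∀ i,
      -K ≤ s.Tmap D w v i ∧ s.Tmap D w v i ≤ K := by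
    intro v hv i
    rw [Tmap]
    split
    · constructor
      · exact le_trans (abs_le.1 (hPb v hv i)).1 (le_max_left _ _)
      · exact max_le (abs_le.1 (hPb v hv i)).2 (Finset.sup'_le _ _ (hQb v hv i))
    · exact abs_le.1 (hKw i)
  haveI : Fact ((-K : ℝ) ≤ K) := ⟨by linarith⟩
  let E := ∀ _i : Fin (2*N+1), Set.Icc (-K : ℝ) K
  let F : E →o E :=
    { toFun := fun u i => ⟨s.Tmap D w (fun j => (u j).1) i,
        (hTb (fun j => (u j).1) (fun j => abs_le.2 ⟨(u j).2.1, (u j).2.2⟩) i).1,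
        (hTb (fun j => (u j).1) (fun j => abs_le.2 ⟨(u j).2.1, (u j).2.2⟩) i).2⟩
      monotone' := by
        intro u u' huu i
        exact s.Tmap_mono hA1 D w (fun j => huu j) i }
  have hfix := OrderHom.map_lfp F
  refine ⟨fun i => ((OrderHom.lfp F) i).1, fun i => ?_⟩
  exact congrArg Subtype.val (congrFun hfix i)

end GameSetup

end Statement0Aux3
section Statement0Aux4

variable {N : ℕ}

namespace GameSetup

variable (s : GameSetup N)

set_option maxHeartbeats 1000000 in
lemma sol_le (hA1 : s.A1) (D : Finset (Fin (2*N+1))) (w : Fin (2*N+1) → ℝ)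
    {v v' : Fin (2*N+1) → ℝ}
    (hv : (∀ i ∈ D, max (s.L.mulVec v i + s.f i) (s.M v i - v i) = 0) ∧
      ∀ i ∉ D, v i = w i)
    (hv' : (∀ i ∈ D, max (s.L.mulVec v' i + s.f i) (s.M v' i - v' i) = 0) ∧
      ∀ i ∉ D, v' i = w i)
    (i0 : Fin (2*N+1)) : v i0 ≤ v' i0 := by
  classical
  by_contra hcon
  push_neg at hcon
  have hne : (Finset.univ : Finset (Fin (2*N+1))).Nonempty :=
    ⟨⟨0, by omega⟩, Finset.mem_univ _⟩
  set m : ℝ := Finset.univ.sup' hne (fun k => v k - v' k) with hm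
  have hmpos : 0 < m := by
    have : v i0 - v' i0 ≤ m := by
      rw [hm]; exact Finset.le_sup' (fun k => v k - v' k) (Finset.mem_univ i0)
    linarith
  have hrle : ∀ j, v j - v' j ≤ m := fun j => by
    rw [hm]; exact Finset.le_sup' (fun k => v k - v' k) (Finset.mem_univ j)
  set A : Finset (Fin (2*N+1)) := Finset.univ.filter (fun k => v k - v' k = m) with hA
  have hAne : A.Nonempty := by
    obtain ⟨b, hb, hbe⟩ := Finset.exists_mem_eq_sup' hne (fun k => v k - v' k)
    exact ⟨b, Finset.mem_filter.2 ⟨Finset.mem_univ b, hbe.symm⟩⟩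
  obtain ⟨i, hiA, hieq⟩ := Finset.exists_mem_eq_sup' hAne (fun k => v k)
  have hiAm : v i - v' i = m := (Finset.mem_filter.1 hiA).2
  have hiD : i ∈ D := by
    by_contra hiD
    have h1 := hv.2 i hiD
    have h2 := hv'.2 i hiD
    rw [h1, h2] at hiAm
    simp at hiAm
    linarith
  have ha : 0 < -(s.L i i) := by linarith [s.L_diag_neg hA1 i]
  -- Pde v' i ≤ v' i
  obtain ⟨⟨h1', h2'⟩, _⟩ := max_eq_zero_iff'.1 (hv'.1 i hiD)
  rw [s.Lv_eq hA1] at h1'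
  have hP' : s.Pde v' i ≤ v' i := by nlinarith
  -- Pde v i < v i
  have hPlt : s.Pde v i < v i := by
    have hsum : ∑ j ∈ Finset.univ.erase i, s.L i j * v j
        - ∑ j ∈ Finset.univ.erase i, s.L i j * v' j
        ≤ (∑ j ∈ Finset.univ.erase i, s.L i j) * m := by
      rw [← Finset.sum_sub_distrib, Finset.sum_mul]
      apply Finset.sum_le_sum
      intro j hj
      have hLnn := s.L_offdiag_nonneg hA1 (Finset.mem_erase.1 hj).1
      have := hrle j
      nlinarith
    have hgap := s.L_gap_pos hA1 i
    have hdiff : s.Pde v i - s.Pde v' i < m := by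
      rw [Pde, Pde, div_sub_div_same, div_lt_iff₀ ha]
      have h2 : (∑ j ∈ Finset.univ.erase i, s.L i j) * m < (-(s.L i i)) * m :=
        mul_lt_mul_of_pos_right hgap hmpos
      nlinarith
    linarith
  -- left branch strictly negative, so M v i = v i
  obtain ⟨⟨h1, h2⟩, h3⟩ := max_eq_zero_iff'.1 (hv.1 i hiD)
  have hMv : s.M v i - v i = 0 := by
    rcases h3 with h3 | h3
    · exfalso
      rw [s.Lv_eq hA1] at h3
      nlinarith
    · exact h3
  obtain ⟨d, hd, hde⟩ := Finset.exists_mem_eq_sup' (s.hZ_ne i)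
    (fun d => (s.B fun _ => d).mulVec v i - s.c (fun _ => d) i)
  have hvi : (s.B fun _ => d).mulVec v i - s.c (fun _ => d) i = v i := by
    have : s.M v i = (s.B fun _ => d).mulVec v i - s.c (fun _ => d) i := hde
    linarith
  have hvi' : (s.B fun _ => d).mulVec v' i - s.c (fun _ => d) i ≤ v' i := by
    have hle : (s.B fun _ => d).mulVec v' i - s.c (fun _ => d) i ≤ s.M v' i :=
      Finset.le_sup' (fun d => (s.B fun _ => d).mulVec v' i - s.c (fun _ => d) i) hd
    linarith
  -- the chain of inequalities
  set Bd := s.B (fun _ => d) with hBd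
  have hBnn : ∀ j ∈ Finset.univ.erase i, 0 ≤ Bd i j := fun j hj =>
    s.B_offdiag_nonneg hA1 hd (Finset.mem_erase.1 hj).1
  have hrow := s.B_row_sum hA1 hd
  set Se : ℝ := ∑ j ∈ Finset.univ.erase i, Bd i j with hSe
  set S : ℝ := ∑ j ∈ Finset.univ.erase i, Bd i j * (v j - v' j) with hS
  have hmain : m ≤ Bd i i * m + S := by
    have hsplit : Bd.mulVec v i - Bd.mulVec v' i = Bd i i * (v i - v' i) + S := by
      rw [mulVec_split, mulVec_split, hS]
      rw [show (∑ j ∈ Finset.univ.erase i, Bd i j * (v j - v' j))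
          = ∑ j ∈ Finset.univ.erase i, (Bd i j * v j - Bd i j * v' j) from
        Finset.sum_congr rfl fun j _ => by ring]
      rw [Finset.sum_sub_distrib]
      ring
    rw [hiAm] at hsplit
    linarith [hvi, hvi', hsplit, hiAm]
  have hSle : S ≤ Se * m := by
    rw [hS, hSe, Finset.sum_mul]
    apply Finset.sum_le_sum
    intro j hj
    exact mul_le_mul_of_nonneg_left (hrle j) (hBnn j hj)
  have hSem : Se * m ≤ (1 - Bd i i) * m :=
    mul_le_mul_of_nonneg_right hrow hmpos.le
  -- equality analysis
  have hSeq : S = Se * m := by linarith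
  have hSem2 : Se * m = (1 - Bd i i) * m := le_antisymm hSem (by linarith)
  have hSeeq : Se = 1 - Bd i i := mul_right_cancel₀ (ne_of_gt hmpos) hSem2
  have hzero : ∀ j ∈ Finset.univ.erase i, Bd i j * (m - (v j - v' j)) = 0 := by
    have hsum0 : ∑ j ∈ Finset.univ.erase i, Bd i j * (m - (v j - v' j)) = 0 := by
      have : ∑ j ∈ Finset.univ.erase i, Bd i j * (m - (v j - v' j))
          = Se * m - S := by
        rw [hS, hSe, Finset.sum_mul, ← Finset.sum_sub_distrib]
        apply Finset.sum_congr rfl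
        intro j hj
        ring
      rw [this, hSeq]
      ring
    intro j hj
    refine (Finset.sum_eq_zero_iff_of_nonneg ?_).1 hsum0 j hj
    intro k hk
    exact mul_nonneg (hBnn k hk) (by linarith [hrle k])
  -- final contradiction
  have hfin : ∑ j ∈ Finset.univ.erase i, Bd i j * v j
      ≤ Se * v i := by
    rw [hSe, Finset.sum_mul]
    apply Finset.sum_le_sum
    intro j hj
    rcases eq_or_lt_of_le (hBnn j hj) with hB0 | hBpos
    · rw [← hB0]; simp
    · have hjA : j ∈ A := by
        have hz := hzero j hj
        have : m - (v j - v' j) = 0 := by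
          rcases mul_eq_zero.1 hz with hc | hc
          · exact absurd hc.symm (ne_of_lt hBpos)
          · exact hc
        exact Finset.mem_filter.2 ⟨Finset.mem_univ j, by linarith⟩
      have hvj : v j ≤ v i := by
        have := Finset.le_sup' (fun k => v k) hjA
        rw [hieq] at this  -- hieq : A.sup' hAne (fun k => v k) = v i
        exact this
      exact mul_le_mul_of_nonneg_left hvj hBpos.le
  have hcpos := s.c_pos' hd
  have hfinal : v i ≤ v i - s.c (fun _ => d) i := by
    have hmv : Bd.mulVec v i = Bd i i * v i + ∑ j ∈ Finset.univ.erase i, Bd i j * v j :=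
      mulVec_split _ _ _
    rw [hSeeq] at hfin
    linarith [hvi, hfin]
  linarith

lemma sol_unique (hA1 : s.A1) (D : Finset (Fin (2*N+1))) (w : Fin (2*N+1) → ℝ)
    {v v' : Fin (2*N+1) → ℝ}
    (hv : (∀ i ∈ D, max (s.L.mulVec v i + s.f i) (s.M v i - v i) = 0) ∧
      ∀ i ∉ D, v i = w i)
    (hv' : (∀ i ∈ D, max (s.L.mulVec v' i + s.f i) (s.M v' i - v' i) = 0) ∧
      ∀ i ∉ D, v' i = w i) : v = v' :=
  funext fun i => le_antisymm (s.sol_le hA1 D w hv hv' i) (s.sol_le hA1 D w hv' hv i)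

end GameSetup

end Statement0Aux4
section Statement0Aux5

variable {N : ℕ}

/-- Extension of a function on `D` by `w` outside `D`. -/
def extendD (D : Finset (Fin (2*N+1))) (w : Fin (2*N+1) → ℝ)
    (vt : {i // i ∈ D} → ℝ) : Fin (2*N+1) → ℝ :=
  fun i => if h : i ∈ D then vt ⟨i, h⟩ else w i

lemma sum_D_extend (D : Finset (Fin (2*N+1))) (w : Fin (2*N+1) → ℝ)
    (vt : {i // i ∈ D} → ℝ) (a : Fin (2*N+1) → ℝ) :
    ∑ j ∈ D, a j * extendD D w vt j = ∑ j : {i // i ∈ D}, a j.val * vt j := by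
  rw [← Finset.sum_coe_sort D (fun j => a j * extendD D w vt j)]
  apply Finset.sum_congr rfl
  intro j _
  unfold extendD
  rw [dif_pos j.2]

lemma sum_Dc_extend (D : Finset (Fin (2*N+1))) (w : Fin (2*N+1) → ℝ)
    (vt : {i // i ∈ D} → ℝ) (a : Fin (2*N+1) → ℝ) :
    ∑ j ∈ Dᶜ, a j * extendD D w vt j = ∑ j ∈ Dᶜ, a j * w j := by
  apply Finset.sum_congr rfl
  intro j hj
  unfold extendD
  rw [dif_neg (Finset.mem_compl.1 hj)]

lemma Ltil_eq (s : GameSetup N) (D : Finset (Fin (2*N+1))) (w : Fin (2*N+1) → ℝ)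
    (vt : {i // i ∈ D} → ℝ) (i : {i // i ∈ D}) :
    (Ltil s D).mulVec vt i + ftil s D w i
      = s.L.mulVec (extendD D w vt) i.val + s.f i.val := by
  have hL : (Ltil s D).mulVec vt i = ∑ j : {i // i ∈ D}, s.L i.val j.val * vt j := by
    rw [Matrix.mulVec, dotProduct]
    apply Finset.sum_congr rfl
    intro j _
    rw [Ltil, Matrix.submatrix_apply]
  have hR : s.L.mulVec (extendD D w vt) i.val
      = ∑ j : {i // i ∈ D}, s.L i.val j.val * vt j + ∑ j ∈ Dᶜ, s.L i.val j * w j := by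
    rw [Matrix.mulVec, dotProduct,
      ← Finset.sum_add_sum_compl D (fun j => s.L i.val j * extendD D w vt j),
      sum_D_extend, sum_Dc_extend]
  rw [hL, hR, ftil]
  ring

lemma MtilVal_eq (s : GameSetup N) (D : Finset (Fin (2*N+1))) (w : Fin (2*N+1) → ℝ)
    (vt : {i // i ∈ D} → ℝ) (d : ℝ) (i : {i // i ∈ D}) :
    MtilVal s D w d vt i
      = (s.B (fun _ => d)).mulVec (extendD D w vt) i.val - s.c (fun _ => d) i.val := by
  have hR : (s.B (fun _ => d)).mulVec (extendD D w vt) i.val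
      = ∑ j : {i // i ∈ D}, s.B (fun _ => d) i.val j.val * vt j
        + ∑ j ∈ Dᶜ, s.B (fun _ => d) i.val j * w j := by
    rw [Matrix.mulVec, dotProduct,
      ← Finset.sum_add_sum_compl D (fun j => s.B (fun _ => d) i.val j * extendD D w vt j),
      sum_D_extend, sum_Dc_extend]
  rw [MtilVal, hR]
  ring

lemma Mtil_eq (s : GameSetup N) (D : Finset (Fin (2*N+1))) (w : Fin (2*N+1) → ℝ)
    (vt : {i // i ∈ D} → ℝ) (i : {i // i ∈ D}) :
    Mtil s D w vt i = s.M (extendD D w vt) i.val := by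
  rw [Mtil, GameSetup.M]
  apply Finset.sup'_congr _ rfl
  intro d _
  exact MtilVal_eq s D w vt d i

end Statement0Aux5
/-- Under (A0) and (A1), for every `G_{≤0} ⊆ D ⊆ G` and every `w ∈ ℝ^G`
there is a unique `v*` solving the constrained QVI problem
`max{Lv* + f, Mv* − v*} = 0` on `D`, `v* = w` on `Dᶜ`; moreover its restriction `v*_D`
is the unique solution of the restricted QVI `max{L̃ṽ + f̃, M̃ṽ − ṽ} = 0`. -/
theorem statement0 (hN : 1 ≤ N) (s : GameSetup N) (hA0 : s.A0) (hA1 : s.A1)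
    (D : Finset (Fin (2*N+1))) (hD : ∀ i, s.x i ≤ 0 → i ∈ D) (w : Fin (2*N+1) → ℝ) :
    (∃! v : Fin (2*N+1) → ℝ,
      (∀ i ∈ D, max (s.L.mulVec v i + s.f i) (s.M v i - v i) = 0) ∧
      ∀ i ∉ D, v i = w i) ∧
    ∀ v : Fin (2*N+1) → ℝ,
      ((∀ i ∈ D, max (s.L.mulVec v i + s.f i) (s.M v i - v i) = 0) ∧
        ∀ i ∉ D, v i = w i) →
      ∀ vt : {i // i ∈ D} → ℝ,
        ((∀ i : {i // i ∈ D},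
            max ((Ltil s D).mulVec vt i + ftil s D w i) (Mtil s D w vt i - vt i) = 0)
          ↔ vt = fun i => v i.val) := by
  obtain ⟨v0, hv0⟩ := s.exists_fixed hA1 D w
  have hv0sol : (∀ i ∈ D, max (s.L.mulVec v0 i + s.f i) (s.M v0 i - v0 i) = 0) ∧
      ∀ i ∉ D, v0 i = w i := by
    constructor
    · intro i hi
      apply (s.fixed_iff hA1 v0 i).2
      have h := hv0 i
      rw [GameSetup.Tmap, if_pos hi] at h
      exact h
    · intro i hi
      have h := hv0 i
      rw [GameSetup.Tmap, if_neg hi] at h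
      exact h.symm
  constructor
  · exact ⟨v0, hv0sol, fun v hv => s.sol_unique hA1 D w hv hv0sol⟩
  · intro v hv vt
    constructor
    · intro hres
      have hvesol : (∀ i ∈ D,
          max (s.L.mulVec (extendD D w vt) i + s.f i)
            (s.M (extendD D w vt) i - extendD D w vt i) = 0) ∧
          ∀ i ∉ D, extendD D w vt i = w i := by
        constructor
        · intro i hi
          have h := hres ⟨i, hi⟩
          rw [Ltil_eq, Mtil_eq] at h
          have hval : extendD D w vt i = vt ⟨i, hi⟩ := dif_pos hi
          rw [hval]
          exact h
        · intro i hi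
          exact dif_neg hi
      have hev : extendD D w vt = v := s.sol_unique hA1 D w hvesol hv
      funext i
      have h := congrFun hev i.val
      have hval : extendD D w vt i.val = vt i := by
        show dite _ _ _ = vt i
        rw [dif_pos i.2]
      rw [hval] at h
      exact h
    · intro hvt
      subst hvt
      have hext : extendD D w (fun i => v i.val) = v := by
        funext i
        unfold extendD
        split
        · rfl
        · next h => exact (hv.2 i h).symm
      intro i
      rw [Ltil_eq, Mtil_eq, hext]
      exact hv.1 i.val i.2

end
end

section
/- Assume (A0), (A1) and (A2). Then for all strategies φ, φ̄ ∈ Φ: the matrix 𝔸(φ,φ̄)^{-1}𝔹(φ) is substochastic; the matrix (𝔸 − 𝔹)(φ,φ̄) := 𝔸(φ,φ̄) − 𝔹(φ) is a WDD L0-matrix; and ĉon[𝔸(φ,φ̄)^{-1}𝔹(φ)] ≤ con[(𝔸 − 𝔹)(φ,φ̄)]. -/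
open Matrix Finset Filter Topology

noncomputable section

variable {N : ℕ}

/-- A walk of length `k` in the directed graph of `A` from `i` to `j`. -/
def walkOfLen {n : Type*} [Fintype n] [DecidableEq n]
    (A : Matrix n n ℝ) (k : ℕ) (i j : n) : Prop :=
  ∃ p : Fin (k+1) → n, p 0 = i ∧ p (Fin.last k) = j ∧
    ∀ m : Fin k, A (p m.castSucc) (p m.succ) ≠ 0

/-- The index of connectivity of a matrix: the sup over non-SDD rows `i` of the least
length of a walk from `i` to an SDD row (`0` if every row is SDD, `⊤` if some non-SDD
row reaches no SDD row). -/
def conIdx {n : Type*} [Fintype n] [DecidableEq n] (A : Matrix n n ℝ) : ℕ∞ :=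
  ⨆ i ∈ {i : n | ¬ SDDRow A i},
    sInf ((fun m : ℕ => (m : ℕ∞)) '' {m : ℕ | ∃ j, SDDRow A j ∧ walkOfLen A m i j})

/-- The index of contraction of a (substochastic) matrix: as `conIdx`, with SDD rows
replaced by rows of sum strictly less than one. -/
def conHat {n : Type*} [Fintype n] [DecidableEq n] (A : Matrix n n ℝ) : ℕ∞ :=
  ⨆ i ∈ {i : n | ¬ ((∑ j, A i j) < 1)},
    sInf ((fun m : ℕ => (m : ℕ∞)) ''
      {m : ℕ | ∃ j, (∑ l, A j l) < 1 ∧ walkOfLen A m i j})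

/-!
Since `Ī ⊆ G_{<0}` and `-I ⊆ G_{>0}`, each row of `𝔸(φ,φ̄)` is a row of `Id - B(δ̄)` (on `Ī`),
of `Id` (on `-I`) or of `-L` (elsewhere), while `𝔹(φ)` vanishes off `-I` and is a reflected row
of `B(δ)` on it. Hence `𝔸` is a WCDD L0-matrix (the chains come from (A0)), `𝔹 ≥ 0` by (A1)
and (A2), and `𝔸 - 𝔹` is a WDD L0-matrix.

For any such splitting `A, B`, the maximum principle for WCDD L0-matrices gives `A⁻¹ ≥ 0`, and
`A⁻¹ B 𝟙 = 𝟙 - u` with `u = A⁻¹ (A - B) 𝟙 ≥ 0`: this is substochasticity, and the rows of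
`A⁻¹ B` summing to less than one are those with `u > 0`. The defect `u` is positive on the SDD
rows of `A - B` and vanishes along the edges of `A` leaving one of its zeros, so a walk in the
graph of `A - B` from a zero of `u` to an SDD row can be followed, without getting longer, in the
graph of `A⁻¹ B`; this gives `ĉon ≤ con`.
-/

section Walks

variable {n : Type*} [Fintype n] [DecidableEq n] {A : Matrix n n ℝ} {i j : n}

lemma walkOfLen_zero_iff : walkOfLen A 0 i j ↔ i = j := by
  constructor
  · rintro ⟨p, rfl, rfl, -⟩
    rfl
  · rintro rfl
    exact ⟨fun _ => i, rfl, rfl, fun m => m.elim0⟩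

lemma walkOfLen_succ_iff {m : ℕ} :
    walkOfLen A (m + 1) i j ↔ ∃ b, A i b ≠ 0 ∧ walkOfLen A m b j := by
  constructor
  · rintro ⟨p, rfl, rfl, hp⟩
    exact ⟨_, hp 0, fun t => p t.succ, rfl, rfl, fun t => hp t.succ⟩
  · rintro ⟨b, hib, p, rfl, rfl, hp⟩
    exact ⟨Fin.cons i p, rfl, rfl, fun t => Fin.cases hib hp t⟩

end Walks


section MatrixClasses

variable {n : Type*} {A : Matrix n n ℝ}

lemma IsL0Matrix.of_rows (h : ∀ i, ∃ M : Matrix n n ℝ, IsL0Matrix M ∧ A i = M i) :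
    IsL0Matrix A := by
  choose M hM hAM using h
  exact ⟨fun i j hij => hAM i ▸ (hM i).1 i j hij, fun i => hAM i ▸ (hM i).2 i⟩

lemma IsL0Matrix.submatrix (hA : IsL0Matrix A) (e : n ≃ n) : IsL0Matrix (A.submatrix e e) :=
  ⟨fun i j hij => hA.1 (e i) (e j) (e.injective.ne hij), fun i => hA.2 (e i)⟩

lemma exists_mwalk_not_mem_of_mwalk {B : Matrix n n ℝ} {S : Set n}
    (hAB : ∀ a ∈ S, ∀ c, a ≠ c → B a c ≠ 0 → A a c ≠ 0) {i j : n} (hij : MWalk B i j)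
    (hi : i ∈ S) (hj : j ∉ S) : ∃ k ∉ S, MWalk A i k := by
  induction hij using Relation.TransGen.head_induction_on with
  | single hac => exact ⟨_, hj, .single (hAB _ hi _ (ne_of_mem_of_not_mem hi hj) hac)⟩
  | @head a c hac _ ih =>
    by_cases hc : c ∈ S
    · obtain ⟨k, hk, hck⟩ := ih hc
      rcases eq_or_ne a c with rfl | hne
      · exact ⟨k, hk, hck⟩
      · exact ⟨k, hk, .head (hAB a hi c hne hac) hck⟩
    · exact ⟨c, hc, .single (hAB a hi c (ne_of_mem_of_not_mem hi hc) hac)⟩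

variable [DecidableEq n]

lemma nonneg_of_isZMatrix_one_sub (h : IsZMatrix (1 - A)) (hdiag : ∀ i, 0 ≤ A i i) (i j : n) :
    0 ≤ A i j := by
  rcases eq_or_ne i j with rfl | hij
  · exact hdiag i
  · simpa [one_apply_ne hij] using h i j hij

lemma isL0Matrix_one : IsL0Matrix (1 : Matrix n n ℝ) :=
  ⟨fun _ _ hij => (one_apply_ne hij).le, fun i => zero_le_one.trans_eq (one_apply_eq i).symm⟩

variable [Fintype n]

lemma IsWDD.of_rows (h : ∀ i, ∃ M : Matrix n n ℝ, IsWDD M ∧ A i = M i) : IsWDD A := by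
  intro i
  obtain ⟨M, hM, hAM⟩ := h i
  simpa only [WDDRow, hAM] using hM i

lemma IsWDD.submatrix (hA : IsWDD A) (e : n ≃ n) : IsWDD (A.submatrix e e) := by
  intro i
  have hsum : ∑ j ∈ univ.erase i, |A (e i) (e j)| = ∑ j ∈ univ.erase (e i), |A (e i) j| := by
    rw [Finset.sum_erase_eq_sub (mem_univ i), Finset.sum_erase_eq_sub (mem_univ (e i)),
      e.sum_comp (fun j => |A (e i) j|)]
  simpa only [WDDRow, submatrix_apply, hsum] using hA (e i)

lemma IsSDD.isWDD (hA : IsSDD A) : IsWDD A := fun i => (hA i).le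

lemma isSDD_one : IsSDD (1 : Matrix n n ℝ) := fun i => by
  rw [SDDRow, Finset.sum_eq_zero fun j hj => by
    rw [one_apply_ne (Finset.ne_of_mem_erase hj).symm, abs_zero]]
  simp

end MatrixClasses

section MaximumPrinciple

variable {n : Type*} [Fintype n] {A : Matrix n n ℝ}

lemma sum_row_eq_mulVec_one (A : Matrix n n ℝ) (i : n) : ∑ j, A i j = (A *ᵥ 1) i := by
  simp [mulVec, dotProduct]

lemma IsZMatrix.eq_zero_of_mulVec_nonneg (hA : IsZMatrix A) {v : n → ℝ} (hv : 0 ≤ v) {a : n}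
    (ha : v a = 0) (hAv : 0 ≤ (A *ᵥ v) a) : (A *ᵥ v) a = 0 ∧ ∀ b, A a b ≠ 0 → v b = 0 := by
  have hterms : ∀ c ∈ univ, A a c * v c ≤ 0 := fun c _ => by
    rcases eq_or_ne a c with rfl | hac
    · rw [ha, mul_zero]
    · exact mul_nonpos_of_nonpos_of_nonneg (hA a c hac) (hv c)
  have hzero : (A *ᵥ v) a = 0 := le_antisymm (Finset.sum_nonpos hterms) hAv
  refine ⟨hzero, fun b hb => ?_⟩
  have := (Finset.sum_eq_zero_iff_of_nonpos hterms).1 hzero b (mem_univ b)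
  exact (mul_eq_zero.1 this).resolve_left hb

variable [DecidableEq n]

lemma IsL0Matrix.sum_row_eq (hA : IsL0Matrix A) (i : n) :
    ∑ j, A i j = |A i i| - ∑ j ∈ univ.erase i, |A i j| := by
  rw [abs_of_nonneg (hA.2 i), ← Finset.add_sum_erase _ _ (mem_univ i), eq_sub_iff_add_eq,
    add_assoc, ← Finset.sum_add_distrib, add_eq_left]
  refine Finset.sum_eq_zero fun j hj => ?_
  rw [abs_of_nonpos (hA.1 i j (Finset.ne_of_mem_erase hj).symm), add_neg_cancel]

lemma IsL0Matrix.sddRow_iff (hA : IsL0Matrix A) (i : n) : SDDRow A i ↔ 0 < ∑ j, A i j := by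
  rw [hA.sum_row_eq, SDDRow, sub_pos]

lemma IsL0Matrix.wddRow_iff (hA : IsL0Matrix A) (i : n) : WDDRow A i ↔ 0 ≤ ∑ j, A i j := by
  rw [hA.sum_row_eq, WDDRow, sub_nonneg]

theorem IsWCDD.nonneg_of_mulVec_nonneg (hA : IsWCDD A) (hL0 : IsL0Matrix A) {u : n → ℝ}
    (hu : 0 ≤ A *ᵥ u) : 0 ≤ u := by
  by_contra hneg
  obtain ⟨i, hi⟩ : ∃ i, u i < 0 := by simpa [Pi.le_def] using hneg
  obtain ⟨i₀, -, hmin⟩ := Finset.exists_min_image univ u ⟨i, mem_univ i⟩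
  set m := u i₀
  have hm : m < 0 := (hmin i (mem_univ i)).trans_lt hi
  -- Where `u` attains its minimum `m < 0`, the row sum of `A` is `0` and `u = m` on all
  -- out-neighbours; following the chain to an SDD row gives a contradiction.
  set v : n → ℝ := u - m • 1
  have hv : 0 ≤ v := fun j => sub_nonneg.2 (by simpa using hmin j (mem_univ j))
  have hAv : ∀ a, (A *ᵥ v) a = (A *ᵥ u) a - m * ∑ j, A a j := fun a => by
    simp [v, mulVec_sub, mulVec_smul, sum_row_eq_mulVec_one]
  have hmin_row : ∀ a, v a = 0 → ¬ SDDRow A a ∧ ∀ b, A a b ≠ 0 → v b = 0 := fun a ha => by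
    have hrow : 0 ≤ ∑ j, A a j := (hL0.wddRow_iff a).1 (hA.1 a)
    have hmrow : m * ∑ j, A a j ≤ 0 := mul_nonpos_of_nonpos_of_nonneg hm.le hrow
    have hua : 0 ≤ (A *ᵥ u) a := hu a
    obtain ⟨hzero, hnbr⟩ := hL0.1.eq_zero_of_mulVec_nonneg hv ha (by rw [hAv]; linarith)
    refine ⟨fun hsdd => ?_, hnbr⟩
    have := mul_neg_of_neg_of_pos hm ((hL0.sddRow_iff a).1 hsdd)
    linarith [hAv a]
  have hv₀ : v i₀ = 0 := by simp [v, m]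
  have hwalk : ∀ b, MWalk A i₀ b → v b = 0 := fun b hb => by
    induction hb with
    | single h => exact (hmin_row _ hv₀).2 _ h
    | tail _ h ih => exact (hmin_row _ ih).2 _ h
  obtain ⟨j, hj, hij⟩ := hA.2 i₀ (hmin_row i₀ hv₀).1
  exact (hmin_row j (hwalk j hij)).1 hj

end MaximumPrinciple

namespace IsWCDD

variable {n : Type*} [Fintype n] [DecidableEq n] {A : Matrix n n ℝ}

theorem isUnit_det (hA : IsWCDD A) (hL0 : IsL0Matrix A) : IsUnit A.det := by
  refine isUnit_iff_ne_zero.2 fun hdet => ?_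
  obtain ⟨v, hv, hAv⟩ := exists_mulVec_eq_zero_iff.2 hdet
  have hpos := hA.nonneg_of_mulVec_nonneg hL0 (u := v) (by rw [hAv])
  have hneg := hA.nonneg_of_mulVec_nonneg hL0 (u := -v) (by rw [mulVec_neg, hAv, neg_zero])
  exact hv (le_antisymm (neg_nonneg.1 hneg) hpos)

theorem inv_mulVec_nonneg (hA : IsWCDD A) (hL0 : IsL0Matrix A) {w : n → ℝ} (hw : 0 ≤ w) :
    0 ≤ A⁻¹ *ᵥ w :=
  hA.nonneg_of_mulVec_nonneg hL0 <| by
    rwa [mulVec_mulVec, mul_nonsing_inv _ (hA.isUnit_det hL0), one_mulVec]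

theorem inv_nonneg (hA : IsWCDD A) (hL0 : IsL0Matrix A) (i j : n) : 0 ≤ A⁻¹ i j := by
  simpa using hA.inv_mulVec_nonneg hL0 (w := Pi.single j 1) (Pi.single_nonneg.2 zero_le_one) i

lemma mulVec_inv_col (hA : IsWCDD A) (hL0 : IsL0Matrix A) (j : n) :
    A *ᵥ (fun i => A⁻¹ i j) = Pi.single j 1 := by
  have hcol : (fun i => A⁻¹ i j) = A⁻¹ *ᵥ Pi.single j 1 := by rw [mulVec_single_one]; rfl
  rw [hcol, mulVec_mulVec, mul_nonsing_inv _ (hA.isUnit_det hL0), one_mulVec]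

theorem inv_diag_pos (hA : IsWCDD A) (hL0 : IsL0Matrix A) (j : n) : 0 < A⁻¹ j j := by
  refine (hA.inv_nonneg hL0 j j).lt_of_ne fun h => ?_
  have := (hL0.1.eq_zero_of_mulVec_nonneg (hA.inv_nonneg hL0 · j) h.symm
    (by rw [hA.mulVec_inv_col hL0]; simp)).1
  simp [hA.mulVec_inv_col hL0] at this

theorem inv_pos_of_ne_zero (hA : IsWCDD A) (hL0 : IsL0Matrix A) {a b k : n} (hab : A a b ≠ 0)
    (hbk : 0 < A⁻¹ b k) : 0 < A⁻¹ a k := by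
  refine (hA.inv_nonneg hL0 a k).lt_of_ne fun h => hbk.ne' ?_
  exact (hL0.1.eq_zero_of_mulVec_nonneg (hA.inv_nonneg hL0 · k) h.symm
    (by rw [hA.mulVec_inv_col hL0, Pi.single_apply]; split_ifs <;> norm_num)).2 b hab

end IsWCDD

section Splitting

variable {n : Type*} [Fintype n] [DecidableEq n]

structure IsWCDDSplitting (A B : Matrix n n ℝ) : Prop where
  l0 : IsL0Matrix A
  wcdd : IsWCDD A
  nonneg : ∀ i j, 0 ≤ B i j
  wdd_sub : IsWDD (A - B)
  l0_sub : IsL0Matrix (A - B)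

def splittingDefect (A B : Matrix n n ℝ) : n → ℝ := A⁻¹ *ᵥ ((A - B) *ᵥ 1)

namespace IsWCDDSplitting

variable {A B : Matrix n n ℝ}

lemma sum_row_inv_mul (h : IsWCDDSplitting A B) (i : n) :
    ∑ j, (A⁻¹ * B) i j = 1 - splittingDefect A B i := by
  rw [sum_row_eq_mulVec_one, splittingDefect, sub_mulVec, mulVec_sub, mulVec_mulVec,
    nonsing_inv_mul _ (h.wcdd.isUnit_det h.l0), one_mulVec, ← mulVec_mulVec]
  simp only [Pi.sub_apply, Pi.one_apply, sub_sub_cancel]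

lemma mulVec_splittingDefect (h : IsWCDDSplitting A B) :
    A *ᵥ splittingDefect A B = (A - B) *ᵥ 1 := by
  rw [splittingDefect, mulVec_mulVec, mul_nonsing_inv _ (h.wcdd.isUnit_det h.l0), one_mulVec]

lemma sub_mulVec_one_nonneg (h : IsWCDDSplitting A B) : 0 ≤ (A - B) *ᵥ 1 := fun i => by
  have := (h.l0_sub.wddRow_iff i).1 (h.wdd_sub i)
  rwa [sum_row_eq_mulVec_one] at this

lemma splittingDefect_nonneg (h : IsWCDDSplitting A B) (i : n) : 0 ≤ splittingDefect A B i :=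
  h.wcdd.inv_mulVec_nonneg h.l0 h.sub_mulVec_one_nonneg i

lemma splittingDefect_pos (h : IsWCDDSplitting A B) {j : n} (hj : SDDRow (A - B) j) :
    0 < splittingDefect A B j := by
  have hw := (h.l0_sub.sddRow_iff j).1 hj
  rw [sum_row_eq_mulVec_one] at hw
  calc 0 < A⁻¹ j j * ((A - B) *ᵥ 1) j := mul_pos (h.wcdd.inv_diag_pos h.l0 j) hw
    _ ≤ splittingDefect A B j :=
      Finset.single_le_sum (fun k _ => mul_nonneg (h.wcdd.inv_nonneg h.l0 j k)
        (h.sub_mulVec_one_nonneg k)) (mem_univ j)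

lemma splittingDefect_eq_zero (h : IsWCDDSplitting A B) {i : n}
    (hi : splittingDefect A B i = 0) :
    ¬ SDDRow (A - B) i ∧ ∀ b, A i b ≠ 0 → splittingDefect A B b = 0 := by
  obtain ⟨-, hnbr⟩ := h.l0.1.eq_zero_of_mulVec_nonneg h.splittingDefect_nonneg hi
    (by rw [h.mulVec_splittingDefect]; exact h.sub_mulVec_one_nonneg i)
  exact ⟨fun hsdd => (h.splittingDefect_pos hsdd).ne' hi, hnbr⟩

lemma inv_mul_nonneg (h : IsWCDDSplitting A B) (i j : n) : 0 ≤ (A⁻¹ * B) i j :=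
  Finset.sum_nonneg fun k _ => mul_nonneg (h.wcdd.inv_nonneg h.l0 i k) (h.nonneg k j)

lemma inv_mul_pos (h : IsWCDDSplitting A B) {a k z : n} (hak : 0 < A⁻¹ a k) (hkz : B k z ≠ 0) :
    0 < (A⁻¹ * B) a z :=
  (mul_pos hak ((h.nonneg k z).lt_of_ne' hkz)).trans_le <|
    Finset.single_le_sum (f := fun c => A⁻¹ a c * B c z)
      (fun c _ => mul_nonneg (h.wcdd.inv_nonneg h.l0 a c) (h.nonneg c z)) (mem_univ k)

lemma inv_mul_ne_zero (h : IsWCDDSplitting A B) {a b : n} (hab : B a b ≠ 0) :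
    (A⁻¹ * B) a b ≠ 0 :=
  (h.inv_mul_pos (h.wcdd.inv_diag_pos h.l0 a) hab).ne'

lemma inv_mul_ne_zero_of_ne_zero (h : IsWCDDSplitting A B) {a b z : n} (hab : A a b ≠ 0)
    (hbz : (A⁻¹ * B) b z ≠ 0) : (A⁻¹ * B) a z ≠ 0 := by
  obtain ⟨k, -, hk⟩ := Finset.exists_ne_zero_of_sum_ne_zero hbz
  have hbk : 0 < A⁻¹ b k := (h.wcdd.inv_nonneg h.l0 b k).lt_of_ne' (left_ne_zero_of_mul hk)
  exact (h.inv_mul_pos (h.wcdd.inv_pos_of_ne_zero h.l0 hab hbk) (right_ne_zero_of_mul hk)).ne'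

/-- Each `B`-edge of the walk is an edge of `A⁻¹ * B`, and an `A`-edge out of a row with zero
defect is absorbed into the next edge of `A⁻¹ * B`. -/
lemma exists_walkOfLen_inv_mul (h : IsWCDDSplitting A B) {j : n}
    (hj : 0 < splittingDefect A B j) :
    ∀ m i, walkOfLen (A - B) m i j →
      ∃ m' ≤ m, ∃ j', 0 < splittingDefect A B j' ∧ walkOfLen (A⁻¹ * B) m' i j' := by
  intro m
  induction m with
  | zero =>
    intro i hw
    exact ⟨0, le_rfl, j, hj, walkOfLen_zero_iff.2 (walkOfLen_zero_iff.1 hw)⟩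
  | succ m ih =>
    intro i hw
    by_cases hi : 0 < splittingDefect A B i
    · exact ⟨0, Nat.zero_le _, i, hi, walkOfLen_zero_iff.2 rfl⟩
    have hi0 : splittingDefect A B i = 0 := le_antisymm (not_lt.1 hi) (h.splittingDefect_nonneg i)
    obtain ⟨b, hib, hbj⟩ := walkOfLen_succ_iff.1 hw
    obtain ⟨m', hm', j', hj', hbj'⟩ := ih b hbj
    by_cases hB : B i b = 0
    swap
    · exact ⟨m' + 1, Nat.succ_le_succ hm', j', hj',
        walkOfLen_succ_iff.2 ⟨b, h.inv_mul_ne_zero hB, hbj'⟩⟩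
    have hA : A i b ≠ 0 := fun hA => hib (by simp [hA, hB])
    have hb0 := (h.splittingDefect_eq_zero hi0).2 b hA
    cases m' with
    | zero =>
      obtain rfl := walkOfLen_zero_iff.1 hbj'
      exact absurd hb0 hj'.ne'
    | succ m'' =>
      obtain ⟨z, hbz, hzj'⟩ := walkOfLen_succ_iff.1 hbj'
      exact ⟨m'' + 1, hm'.trans (Nat.le_succ m), j', hj',
        walkOfLen_succ_iff.2 ⟨z, h.inv_mul_ne_zero_of_ne_zero hA hbz, hzj'⟩⟩

theorem isSubstochastic_inv_mul (h : IsWCDDSplitting A B) : IsSubstochastic (A⁻¹ * B) :=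
  ⟨h.inv_mul_nonneg, fun i => by
    rw [h.sum_row_inv_mul]
    linarith [h.splittingDefect_nonneg i]⟩

theorem conHat_inv_mul_le (h : IsWCDDSplitting A B) : conHat (A⁻¹ * B) ≤ conIdx (A - B) := by
  refine iSup₂_le fun i hi => ?_
  have hi0 : splittingDefect A B i = 0 := by
    simp only [Set.mem_ofPred_eq, h.sum_row_inv_mul, not_lt] at hi
    linarith [h.splittingDefect_nonneg i]
  refine le_iSup₂_of_le i (h.splittingDefect_eq_zero hi0).1 (le_sInf ?_)
  rintro _ ⟨m, ⟨j, hj, hw⟩, rfl⟩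
  obtain ⟨m', hm', j', hj', hw'⟩ := h.exists_walkOfLen_inv_mul (h.splittingDefect_pos hj) m i hw
  refine sInf_le_of_le ⟨m', ⟨j', ?_, hw'⟩, rfl⟩ (Nat.cast_le.2 hm')
  rw [h.sum_row_inv_mul]
  linarith

end IsWCDDSplitting

end Splitting

lemma Smat_mul_apply (M : Matrix (Fin (2*N+1)) (Fin (2*N+1)) ℝ) (i j : Fin (2*N+1)) :
    (Smat N * M) i j = M i.rev j := by
  simp [Smat, mul_apply]

lemma mul_Smat_apply (M : Matrix (Fin (2*N+1)) (Fin (2*N+1)) ℝ) (i j : Fin (2*N+1)) :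
    (M * Smat N) i j = M i j.rev := by
  simp [Smat, mul_apply, eq_comm (a := j), Fin.rev_eq_iff]

namespace GameSetup

variable {s : GameSetup N} {φ φ' : s.Strategy} {i : Fin (2*N+1)}

lemma Strategy.rev_not_mem (hi : i ∈ φ'.I) : i.rev ∉ φ.I := fun hrev => by
  have := φ.hI _ hrev
  rw [s.hx_sym] at this
  linarith [φ'.hI i hi]

lemma Amat_apply (j : Fin (2*N+1)) :
    s.Amat φ φ' i j = (1 : Matrix _ _ ℝ) i j
      - (1 - (if i ∈ φ'.I then 1 else 0) - (if i.rev ∈ φ.I then 1 else 0))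
          * ((1 : Matrix _ _ ℝ) i j + s.L i j)
      - (if i ∈ φ'.I then 1 else 0) * s.B φ'.δ i j := by
  have hdiag : (1 : Matrix _ _ ℝ) - s.Psi φ' - Smat N * s.Psi φ * Smat N = diagonal
      fun i => 1 - (if i ∈ φ'.I then 1 else 0) - (if i.rev ∈ φ.I then 1 else 0) := by
    ext i j
    rw [Matrix.sub_apply, Matrix.sub_apply, mul_Smat_apply, Smat_mul_apply]
    rcases eq_or_ne i j with rfl | hij
    · simp [Psi]
    · simp [Psi, hij, Fin.rev_inj]
  rw [Amat, Matrix.sub_apply, Matrix.sub_apply, hdiag, diagonal_mul, Psi, diagonal_mul,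
    Matrix.add_apply]

lemma Bmat_apply (j : Fin (2*N+1)) :
    s.Bmat φ i j = (if i.rev ∈ φ.I then 1 else 0) * s.B φ.δ i.rev j.rev := by
  rw [Bmat, mul_Smat_apply, mul_assoc, Smat_mul_apply, Psi, diagonal_mul]

lemma Amat_row_of_mem (hi : i ∈ φ'.I) : s.Amat φ φ' i = (1 - s.B φ'.δ) i := by
  ext j
  simp [Amat_apply, hi, Strategy.rev_not_mem hi]

lemma Amat_row_of_rev_mem (hi : i.rev ∈ φ.I) : s.Amat φ φ' i = (1 : Matrix _ _ ℝ) i := by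
  have hi' : i ∉ φ'.I := fun h => Strategy.rev_not_mem h hi
  ext j
  simp [Amat_apply, hi, hi']

lemma Amat_row_of_not_mem (hi : i ∉ φ'.I) (hi' : i.rev ∉ φ.I) : s.Amat φ φ' i = (-s.L) i := by
  ext j
  simp [Amat_apply, hi, hi']

lemma Bmat_row_of_rev_mem (hi : i.rev ∈ φ.I) :
    s.Bmat φ i = (s.B φ.δ).submatrix Fin.rev Fin.rev i := by
  ext j
  simp [Bmat_apply, hi]

lemma Bmat_row_of_rev_not_mem (hi : i.rev ∉ φ.I) : s.Bmat φ i = 0 := by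
  ext j
  simp [Bmat_apply, hi]

lemma exists_Amat_row_eq {P : Matrix (Fin (2*N+1)) (Fin (2*N+1)) ℝ → Prop}
    (h₁ : P (1 - s.B φ'.δ)) (h₂ : P 1) (h₃ : P (-s.L)) (i : Fin (2*N+1)) :
    ∃ M, P M ∧ s.Amat φ φ' i = M i := by
  by_cases hi : i ∈ φ'.I
  · exact ⟨_, h₁, Amat_row_of_mem hi⟩
  by_cases hi' : i.rev ∈ φ.I
  · exact ⟨_, h₂, Amat_row_of_rev_mem hi'⟩
  · exact ⟨_, h₃, Amat_row_of_not_mem hi hi'⟩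

lemma exists_Amat_sub_Bmat_row_eq {P : Matrix (Fin (2*N+1)) (Fin (2*N+1)) ℝ → Prop}
    (h₁ : P (1 - s.B φ'.δ)) (h₂ : P ((1 - s.B φ.δ).submatrix Fin.rev Fin.rev)) (h₃ : P (-s.L))
    (i : Fin (2*N+1)) : ∃ M, P M ∧ (s.Amat φ φ' - s.Bmat φ) i = M i := by
  have hrow : (s.Amat φ φ' - s.Bmat φ) i = s.Amat φ φ' i - s.Bmat φ i := rfl
  rw [hrow]
  by_cases hi : i ∈ φ'.I
  · exact ⟨_, h₁, by rw [Amat_row_of_mem hi, Bmat_row_of_rev_not_mem (Strategy.rev_not_mem hi),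
      sub_zero]⟩
  by_cases hi' : i.rev ∈ φ.I
  · refine ⟨_, h₂, ?_⟩
    ext j
    simp [Amat_row_of_rev_mem hi', Bmat_row_of_rev_mem hi', one_apply]
  · exact ⟨_, h₃, by rw [Amat_row_of_not_mem hi hi', Bmat_row_of_rev_not_mem hi', sub_zero]⟩

lemma sddRow_Amat_of_not_mem (hL : IsSDD (-s.L)) (hi : i ∉ φ'.I) : SDDRow (s.Amat φ φ') i := by
  by_cases hi' : i.rev ∈ φ.I
  · simpa only [SDDRow, Amat_row_of_rev_mem hi'] using isSDD_one i
  · simpa only [SDDRow, Amat_row_of_not_mem hi hi'] using hL i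

lemma isWCDD_Amat (hA0 : s.A0) (hL : IsSDD (-s.L)) (hB : IsWDD (1 - s.B φ'.δ)) :
    IsWCDD (s.Amat φ φ') := by
  refine ⟨IsWDD.of_rows (exists_Amat_row_eq hB isSDD_one.isWDD hL.isWDD), fun i hi => ?_⟩
  have hiI : i ∈ φ'.I := by
    by_contra h
    exact hi (sddRow_Amat_of_not_mem hL h)
  obtain ⟨j, hj, hij⟩ := hA0 φ' i hiI
  have hedge : ∀ a ∈ (φ'.I : Set _), ∀ c, a ≠ c → s.B φ'.δ a c ≠ 0 → s.Amat φ φ' a c ≠ 0 :=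
    fun a ha c hac hB => by simpa [Amat_row_of_mem ha, one_apply_ne hac] using hB
  obtain ⟨k, hk, hik⟩ := exists_mwalk_not_mem_of_mwalk hedge hij hiI hj
  exact ⟨k, sddRow_Amat_of_not_mem hL hk, hik⟩

lemma Bmat_nonneg (hB : ∀ i j, 0 ≤ s.B φ.δ i j) (i j : Fin (2*N+1)) : 0 ≤ s.Bmat φ i j := by
  rw [Bmat_apply]
  split_ifs <;> simp [hB]

theorem isWCDDSplitting (hA0 : s.A0) (hA1 : s.A1) (hA2 : s.A2) (φ φ' : s.Strategy) :
    IsWCDDSplitting (s.Amat φ φ') (s.Bmat φ) := by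
  obtain ⟨⟨hLsdd, hLl0⟩, hB⟩ := hA1
  obtain ⟨hBwdd, hBl0⟩ := hB φ.δ φ.hδ
  obtain ⟨hB'wdd, hB'l0⟩ := hB φ'.δ φ'.hδ
  exact
    { l0 := IsL0Matrix.of_rows (exists_Amat_row_eq hB'l0 isL0Matrix_one hLl0)
      wcdd := isWCDD_Amat hA0 hLsdd hB'wdd
      nonneg := Bmat_nonneg (nonneg_of_isZMatrix_one_sub hBl0.1 (hA2 φ.δ φ.hδ))
      wdd_sub := IsWDD.of_rows
        (exists_Amat_sub_Bmat_row_eq hB'wdd (hBwdd.submatrix Fin.revPerm) hLsdd.isWDD)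
      l0_sub := IsL0Matrix.of_rows
        (exists_Amat_sub_Bmat_row_eq hB'l0 (hBl0.submatrix Fin.revPerm) hLl0) }

end GameSetup

theorem statement6_general (s : GameSetup N)
    (hA0 : s.A0) (hA1 : s.A1) (hA2 : s.A2) :
    ∀ φ φ' : s.Strategy,
      IsSubstochastic ((s.Amat φ φ')⁻¹ * s.Bmat φ) ∧
      (IsWDD (s.Amat φ φ' - s.Bmat φ) ∧ IsL0Matrix (s.Amat φ φ' - s.Bmat φ)) ∧
      conHat ((s.Amat φ φ')⁻¹ * s.Bmat φ) ≤ conIdx (s.Amat φ φ' - s.Bmat φ) := by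
  intro φ φ'
  have h := s.isWCDDSplitting hA0 hA1 hA2 φ φ'
  exact ⟨h.isSubstochastic_inv_mul, ⟨h.wdd_sub, h.l0_sub⟩, h.conHat_inv_mul_le⟩

/-- Under (A0)–(A2), for all strategies `φ, φ̄ ∈ Φ`:
`𝔸(φ,φ̄)⁻¹ 𝔹(φ)` is substochastic, `(𝔸 − 𝔹)(φ,φ̄)` is a WDD L0-matrix, and
`ĉon[𝔸⁻¹𝔹(φ,φ̄)] ≤ con[(𝔸 − 𝔹)(φ,φ̄)]`. -/
theorem statement6 (hN : 1 ≤ N) (s : GameSetup N)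
    (hA0 : s.A0) (hA1 : s.A1) (hA2 : s.A2) :
    ∀ φ φ' : s.Strategy,
      IsSubstochastic ((s.Amat φ φ')⁻¹ * s.Bmat φ) ∧
      (IsWDD (s.Amat φ φ' - s.Bmat φ) ∧ IsL0Matrix (s.Amat φ φ' - s.Bmat φ)) ∧
      conHat ((s.Amat φ φ')⁻¹ * s.Bmat φ) ≤ conIdx (s.Amat φ φ' - s.Bmat φ) :=
  statement6_general s hA0 hA1 hA2

end
end

section
/- Let V : ℝ → ℝ and let c : ℝ × [0,∞) → (0,∞) be strictly subadditive in the impulse, i.e., c(x, δ + δ̄) < c(x,δ) + c(x+δ, δ̄) for all x ∈ ℝ and all δ, δ̄ ≥ 0. Define MV(x) := sup_{δ ≥ 0} {V(x+δ) − c(x,δ)} and I* := {x ∈ ℝ : MV(x) = V(x)}. Suppose that for every x ∈ I* the supremum defining MV(x) is attained at some δ*(x) ≥ 0. Then for every x ∈ I*, the point x + δ*(x) does not belong to I*. -/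
noncomputable section

/-- The loss operator with unconstrained nonnegative impulses:
`MV(x) = sup_{δ ≥ 0} {V(x+δ) − c(x,δ)}`. -/
def Mop (V : ℝ → ℝ) (c : ℝ → ℝ → ℝ) (x : ℝ) : ℝ :=
  sSup ((fun δ => V (x + δ) - c x δ) '' Set.Ici (0:ℝ))

/-!
If `y = x + δ*(x)` were in `I*`, then `V y = V z - c(y, δ*(y))` with `z = y + δ*(y)`, so the
two jumps `x → y → z` would yield `V z - c(x, δ*(x)) - c(y, δ*(y))`, the value of the optimal
impulse at `x`. Strict subadditivity makes the single jump from `x` to `z` strictly better,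
contradicting the optimality of `δ*(x)`.
-/

theorem Mop_eq_of_forall_le {V : ℝ → ℝ} {c : ℝ → ℝ → ℝ} {x d : ℝ} (hd : 0 ≤ d)
    (hmax : ∀ δ, 0 ≤ δ → V (x + δ) - c x δ ≤ V (x + d) - c x d) :
    Mop V c x = V (x + d) - c x d :=
  IsGreatest.csSup_eq ⟨⟨d, hd, rfl⟩, by rintro _ ⟨δ, hδ, rfl⟩; exact hmax δ hδ⟩

theorem statement16_general (V : ℝ → ℝ) (c : ℝ → ℝ → ℝ)
    (hc_sub : ∀ x δ δ', 0 ≤ δ → 0 ≤ δ' → c x (δ + δ') < c x δ + c (x + δ) δ')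
    (Istar : Set ℝ) (hIstar : Istar = {x | Mop V c x = V x})
    (δs : ℝ → ℝ)
    (hδs : ∀ x ∈ Istar, 0 ≤ δs x ∧
      ∀ δ, 0 ≤ δ → V (x + δ) - c x δ ≤ V (x + δs x) - c x (δs x)) :
    ∀ x ∈ Istar, x + δs x ∉ Istar := by
  intro x hx hy
  set d := δs x
  set d' := δs (x + d)
  obtain ⟨hd, hxmax⟩ := hδs x hx
  obtain ⟨hd', hymax⟩ := hδs _ hy
  have hVy : V (x + d) = V (x + d + d') - c (x + d) d' := by
    have hMy : Mop V c (x + d) = V (x + d) := by rw [hIstar] at hy; exact hy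
    rw [← hMy, Mop_eq_of_forall_le hd' hymax]
  have : V (x + d) - c x d < V (x + d) - c x d :=
    calc V (x + d) - c x d = V (x + d + d') - c x d - c (x + d) d' := by rw [hVy]; ring
      _ < V (x + (d + d')) - c x (d + d') := by
        rw [← add_assoc]; linarith [hc_sub x d d' hd hd']
      _ ≤ V (x + d) - c x d := hxmax _ (add_nonneg hd hd')
  exact lt_irrefl _ this

/-- If the cost `c` is strictly positive and strictly subadditive in
the impulse, and for every `x` in the intervention region `I* = {MV = V}` the supremum
defining `MV(x)` is attained at `δ*(x) ≥ 0`, then `x + δ*(x) ∉ I*` for every `x ∈ I*`. -/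
theorem statement16 (V : ℝ → ℝ) (c : ℝ → ℝ → ℝ)
    (hc_pos : ∀ x δ, 0 ≤ δ → 0 < c x δ)
    (hc_sub : ∀ x δ δ', 0 ≤ δ → 0 ≤ δ' → c x (δ + δ') < c x δ + c (x + δ) δ')
    (Istar : Set ℝ) (hIstar : Istar = {x | Mop V c x = V x})
    (δs : ℝ → ℝ)
    (hδs : ∀ x ∈ Istar, 0 ≤ δs x ∧
      ∀ δ, 0 ≤ δ → V (x + δ) - c x δ ≤ V (x + δs x) - c x (δs x)) :
    ∀ x ∈ Istar, x + δs x ∉ Istar :=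
  statement16_general V c hc_sub Istar hIstar δs hδs

end
end

section
/- Let O ⊆ ℝ be open, y* ∈ ℝ, V : ℝ → ℝ, and let c̄ : ℝ × ℝ → ℝ be twice continuously differentiable on an open neighborhood of O × {y*}. Suppose V is differentiable at y* and that for every x ∈ O one has y* > x and the function y ↦ V(y) − c̄(x,y) attains a local maximum over (x, +∞) at y = y*. Then the mixed partial derivative ∂²c̄/∂x∂y (x, y*) = 0 for all x ∈ O. -/
noncomputable section

/-- If `V` is differentiable at `y*`, the re-parametrized cost `c̄` is
`C²` on an open neighborhood of `O × {y*}`, and for every `x` in the open set `O` the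
function `y ↦ V(y) − c̄(x,y)` has a local maximum over `(x, +∞)` at `y* > x`, then the
mixed partial derivative `∂²c̄/∂x∂y (x, y*)` vanishes for all `x ∈ O`. -/
theorem statement19 (O : Set ℝ) (hO : IsOpen O) (ystar : ℝ)
    (V : ℝ → ℝ) (cb : ℝ → ℝ → ℝ)
    (hV : DifferentiableAt ℝ V ystar)
    (hcb : ∃ U : Set (ℝ × ℝ), IsOpen U ∧ (∀ x ∈ O, (x, ystar) ∈ U) ∧
      ContDiffOn ℝ 2 (fun p : ℝ × ℝ => cb p.1 p.2) U)
    (hmax : ∀ x ∈ O, x < ystar ∧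
      IsLocalMaxOn (fun y => V y - cb x y) (Set.Ioi x) ystar) :
    ∀ x ∈ O, deriv (fun t => deriv (fun y => cb t y) ystar) x = 0 := by
  obtain ⟨U, hUopen, hUmem, hC2⟩ := hcb
  -- For every x ∈ O, the partial derivative ∂cb/∂y (x, y*) equals deriv V y*.
  have key : ∀ x ∈ O, deriv (fun y => cb x y) ystar = deriv V ystar := by
    intro x hx
    have hdiff : DifferentiableAt ℝ (fun y => cb x y) ystar := by
      have hca : ContDiffAt ℝ 2 (fun p : ℝ × ℝ => cb p.1 p.2) (x, ystar) :=
        hC2.contDiffAt (hUopen.mem_nhds (hUmem x hx))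
      have hF : DifferentiableAt ℝ (fun p : ℝ × ℝ => cb p.1 p.2) (x, ystar) :=
        hca.differentiableAt (by norm_num)
      have hG : DifferentiableAt ℝ (fun y : ℝ => ((x, y) : ℝ × ℝ)) ystar :=
        (differentiableAt_const x).prodMk differentiableAt_id
      exact hF.comp ystar hG
    obtain ⟨hlt, hmaxOn⟩ := hmax x hx
    have hloc : IsLocalMax (fun y => V y - cb x y) ystar :=
      hmaxOn.isLocalMax (Ioi_mem_nhds hlt)
    have h0 : deriv (fun y => V y - cb x y) ystar = 0 := hloc.deriv_eq_zero
    rw [deriv_fun_sub hV hdiff] at h0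
    linarith
  intro x hx
  have hev : (fun t => deriv (fun y => cb t y) ystar)
      =ᶠ[nhds x] fun _ => deriv V ystar := by
    filter_upwards [hO.mem_nhds hx] with t ht using key t ht
  rw [hev.deriv_eq, deriv_const]

end
end
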